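/- For α ∈ ℂ let f_α(x,y) = xy(x⁴ + αx²y² + y⁴) ∈ ℂ[x,y]. Let α₁, α₂ ∈ ℂ with α₁² ≠ 4 and α₂² ≠ 4. Then there exists an invertible 2×2 complex matrix g = [[a,b],[c,d]] such that f_{α₂}(x,y) = f_{α₁}(ax+by, cx+dy) if and only if α₁² = α₂². -/
import Mathlib


open MvPolynomial

/-- The binary sextic `f_α = xy(x⁴ + αx²y² + y⁴)`. -/
noncomputable def sexticQ8 (α : ℂ) : MvPolynomial (Fin 2) ℂ :=
  X 0 * X 1 * (X 0 ^ 4 + C α * X 0 ^ 2 * X 1 ^ 2 + X 1 ^ 4)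

private lemma sexticQ8_key (a b c d p q : ℂ) (hp4 : p ^ 2 ≠ 4)
    (hD : a * d - b * c ≠ 0)
    (H : ∀ x y : ℂ, (a*x+b*y) * (c*x+d*y) *
        ((a*x+b*y)^4 + p*(a*x+b*y)^2*(c*x+d*y)^2 + (c*x+d*y)^4)
        = x*y*(x^4 + q*x^2*y^2 + y^4)) :
    p ^ 2 = q ^ 2 := by
  have h0 : a*c*(a^4 + p*a^2*c^2 + c^4) = 0 := by linear_combination H 1 0
  have h6 : b*d*(b^4 + p*b^2*d^2 + d^4) = 0 := by linear_combination H 0 1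
  have h1 : a^5*d + 5*a^4*b*c + 3*a^3*c^2*d*p + 3*a^2*b*c^3*p + 5*a*c^4*d + b*c^5 = 1 := by
    linear_combination (1/12 : ℂ)*H 1 1 + (1/24 : ℂ)*H (-1) 1 - (1/24 : ℂ)*H 2 1
      - (1/120 : ℂ)*H (-2) 1 + (1/120 : ℂ)*H 3 1 - (3 : ℂ)*H 1 0 - (1/12 : ℂ)*H 0 1
  have h2 : 5*a^4*b*d + 10*a^3*b^2*c + 3*a^3*c*d^2*p + 9*a^2*b*c^2*d*p + 3*a*b^2*c^3*p
      + 10*a*c^3*d^2 + 5*b*c^4*d = 0 := by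
    linear_combination (-1/6 : ℂ)*H 1 1 + (-1/6 : ℂ)*H (-1) 1 + (1/24 : ℂ)*H 2 1
      + (1/24 : ℂ)*H (-2) 1 - (5 : ℂ)*H 1 0 + (1/4 : ℂ)*H 0 1
  have h3 : 10*a^3*b^2*d + a^3*d^3*p + 10*a^2*b^3*c + 9*a^2*b*c*d^2*p + 9*a*b^2*c^2*d*p
      + 10*a*c^2*d^3 + b^3*c^3*p + 10*b*c^3*d^2 = q := by
    linear_combination (-7/12 : ℂ)*H 1 1 - (1/24 : ℂ)*H (-1) 1 + (7/24 : ℂ)*H 2 1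
      - (1/24 : ℂ)*H (-2) 1 - (1/24 : ℂ)*H 3 1 + (15 : ℂ)*H 1 0 + (5/12 : ℂ)*H 0 1
  have h4 : 10*a^2*b^3*d + 3*a^2*b*d^3*p + 5*a*b^4*c + 9*a*b^2*c*d^2*p + 5*a*c*d^4
      + 3*b^3*c^2*d*p + 10*b*c^2*d^3 = 0 := by
    linear_combination (2/3 : ℂ)*H 1 1 + (2/3 : ℂ)*H (-1) 1 - (1/24 : ℂ)*H 2 1
      - (1/24 : ℂ)*H (-2) 1 + (4 : ℂ)*H 1 0 - (5/4 : ℂ)*H 0 1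
  have h5 : 5*a*b^4*d + 3*a*b^2*d^3*p + a*d^5 + b^5*c + 3*b^3*c*d^2*p + 5*b*c*d^4 = 1 := by
    linear_combination H 1 1 - (1/2 : ℂ)*H (-1) 1 - (1/4 : ℂ)*H 2 1 + (1/20 : ℂ)*H (-2) 1
      + (1/30 : ℂ)*H 3 1 - (12 : ℂ)*H 1 0 - (1/3 : ℂ)*H 0 1
  clear H
  rcases mul_eq_zero.mp h0 with hac | hR
  · rcases mul_eq_zero.mp hac with ha | hc
    · -- a = 0
      subst ha
      have hbc : b * c ≠ 0 := fun h => hD (by linear_combination -h)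
      have hb := left_ne_zero_of_mul hbc
      have hc := right_ne_zero_of_mul hbc
      have hd : d = 0 := by
        have h2' : (5*b*c^4) * d = 0 := by linear_combination h2
        exact (mul_eq_zero.mp h2').resolve_left
          (mul_ne_zero (mul_ne_zero (by norm_num) hb) (pow_ne_zero 4 hc))
      subst hd
      have k1 : b*c^5 = 1 := by linear_combination h1
      have k5 : b^5*c = 1 := by linear_combination h5
      have k3 : p*(b^3*c^3) = q := by linear_combination h3
      have h15 : b*c^5*(b^5*c) = 1 := by rw [k1, one_mul, k5]
      linear_combination (p*(b^3*c^3) + q)*k3 - p^2*h15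
    · -- c = 0
      subst hc
      have had : a * d ≠ 0 := fun h => hD (by linear_combination h)
      have ha := left_ne_zero_of_mul had
      have hd := right_ne_zero_of_mul had
      have hb : b = 0 := by
        have h2' : (5*a^4*d) * b = 0 := by linear_combination h2
        exact (mul_eq_zero.mp h2').resolve_left
          (mul_ne_zero (mul_ne_zero (by norm_num) (pow_ne_zero 4 ha)) hd)
      subst hb
      have k1 : a^5*d = 1 := by linear_combination h1
      have k5 : a*d^5 = 1 := by linear_combination h5
      have k3 : p*(a^3*d^3) = q := by linear_combination h3
      have h15 : a^5*d*(a*d^5) = 1 := by rw [k1, one_mul, k5]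
      linear_combination (p*(a^3*d^3) + q)*k3 - p^2*h15
  · -- a⁴ + p a²c² + c⁴ = 0
    have ha : a ≠ 0 := by
      intro h
      rw [h] at hR
      have hc4 : c ^ 4 = 0 := by linear_combination hR
      have hc0 : c = 0 := (pow_eq_zero_iff (by norm_num)).mp hc4
      exact hD (by rw [h, hc0]; ring)
    have hc : c ≠ 0 := by
      intro h
      rw [h] at hR
      have ha4 : a ^ 4 = 0 := by linear_combination hR
      have ha0 : a = 0 := (pow_eq_zero_iff (by norm_num)).mp ha4
      exact hD (by rw [h, ha0]; ring)
    rcases mul_eq_zero.mp h6 with hbd | hS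
    · rcases mul_eq_zero.mp hbd with hb | hd
      · subst hb
        have hd : d ≠ 0 := fun h => hD (by rw [h]; ring)
        have h4' : (5*a*c) * d^4 = 0 := by linear_combination h4
        exact absurd ((mul_eq_zero.mp h4').resolve_left
          (mul_ne_zero (mul_ne_zero (by norm_num) ha) hc)) (pow_ne_zero 4 hd)
      · subst hd
        have hb : b ≠ 0 := fun h => hD (by rw [h]; ring)
        have h4' : (5*a*c) * b^4 = 0 := by linear_combination h4
        exact absurd ((mul_eq_zero.mp h4').resolve_left
          (mul_ne_zero (mul_ne_zero (by norm_num) ha) hc)) (pow_ne_zero 4 hb)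
    · -- b⁴ + p b²d² + d⁴ = 0
      have hb : b ≠ 0 := by
        intro h
        rw [h] at hS
        have hd4 : d ^ 4 = 0 := by linear_combination hS
        have hd0 : d = 0 := (pow_eq_zero_iff (by norm_num)).mp hd4
        exact hD (by rw [h, hd0]; ring)
      have hd : d ≠ 0 := by
        intro h
        rw [h] at hS
        have hb4 : b ^ 4 = 0 := by linear_combination hS
        have hb0 : b = 0 := (pow_eq_zero_iff (by norm_num)).mp hb4
        exact hD (by rw [h, hb0]; ring)
      obtain ⟨T, rfl⟩ : ∃ T, a = T * c := ⟨a / c, (div_mul_cancel₀ a hc).symm⟩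
      obtain ⟨S, rfl⟩ : ∃ S, b = S * d := ⟨b / d, (div_mul_cancel₀ b hd).symm⟩
      have htau : T^4 + p*T^2 + 1 = 0 := by
        have h' : c^4 * (T^4 + p*T^2 + 1) = 0 := by linear_combination hR
        exact (mul_eq_zero.mp h').resolve_left (pow_ne_zero 4 hc)
      have hsig : S^4 + p*S^2 + 1 = 0 := by
        have h' : d^4 * (S^4 + p*S^2 + 1) = 0 := by linear_combination hS
        exact (mul_eq_zero.mp h').resolve_left (pow_ne_zero 4 hd)
      have hT0 : T ≠ 0 := by
        intro h
        rw [h] at htau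
        norm_num at htau
      have hTS : T - S ≠ 0 := by
        intro h
        have hts : T = S := by linear_combination h
        exact hD (by rw [hts]; ring)
      have hE2 : 10*T^3*S^2 + 3*p*T*S^2 + 5*T^4*S + 9*p*T^2*S + 5*S + 10*T + 3*p*T^3 = 0 := by
        have h' : c^4*d^2 *
            (10*T^3*S^2 + 3*p*T*S^2 + 5*T^4*S + 9*p*T^2*S + 5*S + 10*T + 3*p*T^3) = 0 := by
          linear_combination h2
        exact (mul_eq_zero.mp h').resolve_left
          (mul_ne_zero (pow_ne_zero 4 hc) (pow_ne_zero 2 hd))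
      have hsplit : (T^2 - S^2) * (T^2 + S^2 + p) = 0 := by linear_combination htau - hsig
      rcases mul_eq_zero.mp hsplit with hA | hii
      · have hTS2 : (T - S) * (T + S) = 0 := by linear_combination hA
        have hSv : S = -T := by
          have h' := (mul_eq_zero.mp hTS2).resolve_left hTS
          linear_combination h'
        subst hSv
        have hp0 : p * T^3 = 0 := by
          linear_combination (-1/8 : ℂ)*hE2 + (5*T/8)*htau
        have hp : p = 0 := (mul_eq_zero.mp hp0).resolve_right (pow_ne_zero 3 hT0)
        subst hp
        have hq : q = 0 := by linear_combination -h3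
        rw [hq]
      · have hst2 : (S*T - 1) * (S*T + 1) = 0 := by linear_combination T^2*hii - htau
        rcases mul_eq_zero.mp hst2 with h' | h'
        · have hst : S*T = 1 := by linear_combination h'
          have hq20 : (3*p^2 - 4*p - 20) * T^2 = 0 := by
            linear_combination (-T)*hE2
              + (5 + 10*T^2 + 10*T^3*S + 5*T^4 + 3*p + 3*p*T*S + 9*p*T^2)*hst
              + (5 + 3*p)*htau
          have hp20 : 3*p^2 - 4*p - 20 = 0 :=
            (mul_eq_zero.mp hq20).resolve_right (pow_ne_zero 2 hT0)
          have hfac : (3*p - 10) * (p + 2) = 0 := by linear_combination hp20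
          have hp : p = 10/3 := by
            have h2' := (mul_eq_zero.mp hfac).resolve_right (fun h'' => hp4 (by
              have hpv : p = -2 := by linear_combination h''
              rw [hpv]; norm_num))
            linear_combination (1/3 : ℂ)*h2'
          subst hp
          have hτ4 : (3*T^2 + 1) * (T^2 + 3) = 0 := by linear_combination (3 : ℂ)*htau
          rcases mul_eq_zero.mp hτ4 with hv | hv
          · have hT2 : T^2 = -1/3 := by linear_combination (1/3 : ℂ)*hv
            have hx : S * T^2 = T := by linear_combination T*hst
            rw [hT2] at hx
            have hSv : S = -3*T := by linear_combination (-3 : ℂ)*hx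
            subst hSv
            linear_combination
              ((-180)*c^3*d^3*T^5 + (280/3)*c^3*d^3*T^3 + (-20)*c^3*d^3*T + q)*h3
              - (100/9 : ℂ)*(162*c*d^5*T^5 + (-180)*c*d^5*T^3 + (-14)*c*d^5*T)*h1
              - (100/9 : ℂ)*h5
              + ((-57600)*c^6*d^6*T^8 + 44800*c^6*d^6*T^6 + (44800/3)*c^6*d^6*T^4
                + (-6400/3)*c^6*d^6*T^2)*hT2
          · have hT2 : T^2 = -3 := by linear_combination hv
            have hx : S * T^2 = T := by linear_combination T*hst
            rw [hT2] at hx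
            have hSv : S = (-1/3)*T := by linear_combination (-1/3 : ℂ)*hx
            subst hSv
            linear_combination
              ((20/27)*c^3*d^3*T^5 + (-280/81)*c^3*d^3*T^3 + (20/3)*c^3*d^3*T + q)*h3
              - (100/9 : ℂ)*((14/243)*c*d^5*T^5 + (20/27)*c*d^5*T^3 + (-2/3)*c*d^5*T)*h1
              - (100/9 : ℂ)*h5
              + ((-6400/6561)*c^6*d^6*T^8 + (44800/6561)*c^6*d^6*T^6 + (44800/2187)*c^6*d^6*T^4
                + (-6400/243)*c^6*d^6*T^2)*hT2
        · have hst : S*T = -1 := by linear_combination h'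
          have hq20 : (3*p^2 + 4*p - 20) * T^2 = 0 := by
            linear_combination (-T)*hE2
              + (5 - 10*T^2 + 10*T^3*S + 5*T^4 - 3*p + 3*p*T*S + 9*p*T^2)*hst
              + (-5 + 3*p)*htau
          have hp20 : 3*p^2 + 4*p - 20 = 0 :=
            (mul_eq_zero.mp hq20).resolve_right (pow_ne_zero 2 hT0)
          have hfac : (3*p + 10) * (p - 2) = 0 := by linear_combination hp20
          have hp : p = -10/3 := by
            have h2' := (mul_eq_zero.mp hfac).resolve_right (fun h'' => hp4 (by
              have hpv : p = 2 := by linear_combination h''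
              rw [hpv]; norm_num))
            linear_combination (1/3 : ℂ)*h2'
          subst hp
          have hτ4 : (3*T^2 - 1) * (T^2 - 3) = 0 := by linear_combination (3 : ℂ)*htau
          rcases mul_eq_zero.mp hτ4 with hv | hv
          · have hT2 : T^2 = 1/3 := by linear_combination (1/3 : ℂ)*hv
            have hx : S * T^2 = -T := by linear_combination T*hst
            rw [hT2] at hx
            have hSv : S = -3*T := by linear_combination (3 : ℂ)*hx
            subst hSv
            linear_combination
              ((-180)*c^3*d^3*T^5 + (-280/3)*c^3*d^3*T^3 + (-20)*c^3*d^3*T + q)*h3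
              - (100/9 : ℂ)*(162*c*d^5*T^5 + 180*c*d^5*T^3 + (-14)*c*d^5*T)*h1
              - (100/9 : ℂ)*h5
              + ((-57600)*c^6*d^6*T^8 + (-44800)*c^6*d^6*T^6 + (44800/3)*c^6*d^6*T^4
                + (6400/3)*c^6*d^6*T^2)*hT2
          · have hT2 : T^2 = 3 := by linear_combination hv
            have hx : S * T^2 = -T := by linear_combination T*hst
            rw [hT2] at hx
            have hSv : S = (-1/3)*T := by linear_combination (1/3 : ℂ)*hx
            subst hSv
            linear_combination
              ((20/27)*c^3*d^3*T^5 + (280/81)*c^3*d^3*T^3 + (20/3)*c^3*d^3*T + q)*h3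
              - (100/9 : ℂ)*((14/243)*c*d^5*T^5 + (-20/27)*c*d^5*T^3 + (-2/3)*c*d^5*T)*h1
              - (100/9 : ℂ)*h5
              + ((-6400/6561)*c^6*d^6*T^8 + (-44800/6561)*c^6*d^6*T^6 + (44800/2187)*c^6*d^6*T^4
                + (6400/243)*c^6*d^6*T^2)*hT2

/-- For `α₁² ≠ 4 ≠ α₂²`, the sextics `xy(x⁴+α₁x²y²+y⁴)` and `xy(x⁴+α₂x²y²+y⁴)` are
equivalent under an invertible linear substitution of variables iff `α₁² = α₂²`. -/
theorem sexticQ8_equiv_iff (α₁ α₂ : ℂ) (h₁ : α₁ ^ 2 ≠ 4) (h₂ : α₂ ^ 2 ≠ 4) :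
    (∃ g : Matrix (Fin 2) (Fin 2) ℂ, IsUnit g ∧
        aeval ![C (g 0 0) * X 0 + C (g 0 1) * X 1, C (g 1 0) * X 0 + C (g 1 1) * X 1]
          (sexticQ8 α₁) = sexticQ8 α₂) ↔
      α₁ ^ 2 = α₂ ^ 2 := by
  constructor
  · rintro ⟨g, hg, he⟩
    have hD : g 0 0 * g 1 1 - g 0 1 * g 1 0 ≠ 0 := by
      have h := (Matrix.isUnit_iff_isUnit_det g).mp hg
      rw [Matrix.det_fin_two] at h
      exact isUnit_iff_ne_zero.mp h
    refine sexticQ8_key (g 0 0) (g 0 1) (g 1 0) (g 1 1) α₁ α₂ h₁ hD ?_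
    intro x y
    have h := congrArg (aeval (R := ℂ) ![x, y]) he
    simp only [sexticQ8, map_add, map_mul, map_pow, aeval_X, aeval_C, algebraMap_eq,
      Matrix.cons_val_zero, Matrix.cons_val_one, Matrix.head_cons,
      Algebra.algebraMap_self, RingHom.id_apply] at h
    linear_combination h
  · intro hpq
    have hfac : (α₂ - α₁) * (α₂ + α₁) = 0 := by linear_combination -hpq
    rcases mul_eq_zero.mp hfac with h | h
    · have hq : α₂ = α₁ := by linear_combination h
      subst hq
      refine ⟨!![1, 0; 0, 1], ?_, ?_⟩
      · rw [Matrix.isUnit_iff_isUnit_det, Matrix.det_fin_two_of]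
        norm_num
      · simp [sexticQ8]
    · have hq : α₂ = -α₁ := by linear_combination h
      subst hq
      obtain ⟨l, hl⟩ := IsAlgClosed.exists_pow_nat_eq (-Complex.I) (by norm_num : 0 < 6)
      have hl0 : l ≠ 0 := by
        intro h0
        rw [h0] at hl
        have h00 : (0:ℂ)^6 = 0 := by norm_num
        rw [h00] at hl
        exact Complex.I_ne_zero (by linear_combination hl)
      refine ⟨!![l, 0; 0, Complex.I * l], ?_, ?_⟩
      · rw [Matrix.isUnit_iff_isUnit_det, Matrix.det_fin_two_of]
        apply isUnit_iff_ne_zero.mpr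
        simp [hl0, Complex.I_ne_zero]
      · have hC6 : (C l : MvPolynomial (Fin 2) ℂ)^6 = -(C Complex.I) := by
          rw [← map_pow, hl, map_neg]
        have hI2 : (C Complex.I : MvPolynomial (Fin 2) ℂ)^2 = -1 := by
          rw [← map_pow, Complex.I_sq, map_neg, map_one]
        simp only [sexticQ8, Matrix.cons_val', Matrix.cons_val_zero, Matrix.cons_val_one,
          Matrix.head_cons, Matrix.empty_val', Matrix.cons_val_fin_one, Matrix.head_fin_const,
          Matrix.of_apply, map_add, map_mul, map_pow, aeval_X, aeval_C, map_neg, C_0, C_1,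
          C_mul, algebraMap_eq]
        linear_combination
          ((C l)^6 * (C Complex.I)^3 * (X 0 : MvPolynomial (Fin 2) ℂ) * (X 1)^5
            + (C l)^6 * C Complex.I * C α₁ * (X 0)^3 * (X 1)^3
            - (C l)^6 * C Complex.I * (X 0) * (X 1)^5
            + C α₁ * (X 0)^3 * (X 1)^3
            - (X 0)^5 * (X 1) - (X 0) * (X 1)^5) * hI2
          + (-(C Complex.I) * C α₁ * (X 0 : MvPolynomial (Fin 2) ℂ)^3 * (X 1)^3
            + C Complex.I * (X 0)^5 * (X 1)
            + C Complex.I * (X 0) * (X 1)^5) * hC6
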